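/- In a 2-crossed module, for all h₁, h₂ ∈ H: {h₁,h₂}ₚ⁻¹ = h₁ ▷' {h₁⁻¹, ∂(h₁) ▷ h₂}ₚ, where h ▷' l = l·{δ(l)⁻¹,h}ₚ. -/
import Mathlib


/-- A 2-crossed module `(L → H → G, ▷, {_,_}ₚ)`. -/
structure TwoCrossedModule (G H L : Type*) [Group G] [Group H] [Group L] where
  /-- the map `δ : L → H` -/
  dl : L →* H
  /-- the map `∂ : H → G` -/
  dh : H →* G
  /-- the action `▷` of `G` on `H` by automorphisms -/
  actH : G →* MulAut H
  /-- the action `▷` of `G` on `L` by automorphisms -/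
  actL : G →* MulAut L
  /-- the Peiffer lifting `{_,_}ₚ : H × H → L` -/
  pf : H → H → L
  comp_trivial : ∀ l : L, dh (dl l) = 1
  equiv_dh : ∀ (g : G) (h : H), dh (actH g h) = g * dh h * g⁻¹
  equiv_dl : ∀ (g : G) (l : L), dl (actL g l) = actH g (dl l)
  equiv_pf : ∀ (g : G) (h₁ h₂ : H), actL g (pf h₁ h₂) = pf (actH g h₁) (actH g h₂)
  ax1 : ∀ h₁ h₂ : H, dl (pf h₁ h₂) = h₁ * h₂ * h₁⁻¹ * actH (dh h₁) h₂⁻¹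
  ax2 : ∀ l₁ l₂ : L, l₁ * l₂ * l₁⁻¹ * l₂⁻¹ = pf (dl l₁) (dl l₂)
  ax3 : ∀ h₁ h₂ h₃ : H,
    pf (h₁ * h₂) h₃ = pf h₁ (h₂ * h₃ * h₂⁻¹) * actL (dh h₁) (pf h₂ h₃)
  ax4 : ∀ h₁ h₂ h₃ : H, pf h₁ (h₂ * h₃) =
    pf h₁ h₂ * pf h₁ h₃ * pf ((h₁ * h₃ * h₁⁻¹ * actH (dh h₁) h₃⁻¹)⁻¹) (actH (dh h₁) h₂)
  ax5 : ∀ (h : H) (l : L), pf (dl l) h * pf h (dl l) = l * actL (dh h) l⁻¹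

/-- The induced action `h ▷' l = l · {δ(l)⁻¹, h}ₚ` of `H` on `L`. -/
def TwoCrossedModule.ap {G H L : Type*} [Group G] [Group H] [Group L]
    (T : TwoCrossedModule G H L) (h : H) (l : L) : L :=
  l * T.pf (T.dl l)⁻¹ h

section Helpers

variable {G H L : Type*} [Group G] [Group H] [Group L] (T : TwoCrossedModule G H L)

lemma TCM_pf_one_left (h : H) : T.pf 1 h = 1 := by
  have h3 := T.ax3 1 1 h
  simp only [one_mul, mul_one, inv_one, map_one, MulAut.one_apply] at h3
  exact (left_eq_mul.mp h3)

lemma TCM_L2 (x z : H) :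
    T.actL (T.dh x) (T.pf x⁻¹ z) = (T.pf x (x⁻¹ * z * x))⁻¹ := by
  have h3 := T.ax3 x x⁻¹ z
  rw [mul_inv_cancel, TCM_pf_one_left, inv_inv] at h3
  exact (inv_eq_of_mul_eq_one_right h3.symm).symm

end Helpers

theorem pf_inv_eq_ap {G H L : Type*} [Group G] [Group H] [Group L]
    (T : TwoCrossedModule G H L) (h₁ h₂ : H) :
    (T.pf h₁ h₂)⁻¹ = T.ap h₁ (T.pf h₁⁻¹ (T.actH (T.dh h₁) h₂)) := by
  set b := T.actH (T.dh h₁) h₂ with hb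
  set m := T.pf h₁⁻¹ b with hm
  have actH_cancel : ∀ (g : G) (h : H), T.actH g⁻¹ (T.actH g h) = h := by
    intro g h
    rw [map_inv, MulAut.inv_def]
    exact (T.actH g).symm_apply_apply h
  have hact : T.actH (T.dh h₁⁻¹) b⁻¹ = h₂⁻¹ := by
    rw [map_inv T.dh, hb, ← map_inv (T.actH (T.dh h₁)) h₂]
    exact actH_cancel _ _
  have hdlm : T.dl m = h₁⁻¹ * b * h₁ * h₂⁻¹ := by
    have h1 := T.ax1 h₁⁻¹ b
    rw [h1, inv_inv, hact]
  have hconj : h₁⁻¹ * b * h₁ = T.dl m * h₂ := by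
    rw [hdlm]; group
  have key4 : T.actL (T.dh h₁) m = (T.pf h₁ (T.dl m * h₂))⁻¹ := by
    rw [hm, TCM_L2, hconj]
  have key5 : T.ap h₁ m = T.actL (T.dh h₁) m * (T.pf h₁ (T.dl m)⁻¹)⁻¹ := by
    have h5 := T.ax5 h₁ m⁻¹
    rw [inv_inv] at h5
    have e : T.pf (T.dl m⁻¹) h₁ =
        m⁻¹ * T.actL (T.dh h₁) m * (T.pf h₁ (T.dl m⁻¹))⁻¹ := by
      rw [← h5]; group
    unfold TwoCrossedModule.ap
    rw [← map_inv T.dl m, e]; group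
  have key7 : T.pf h₁ h₂ = T.pf h₁ (T.dl m)⁻¹ * T.pf h₁ (T.dl m * h₂) := by
    have h4 := T.ax4 h₁ (T.dl m)⁻¹ (T.dl m * h₂)
    rw [inv_mul_cancel_left, ← T.ax1 h₁ (T.dl m * h₂)] at h4
    have hn : T.pf h₁ (T.dl m * h₂) = T.actL (T.dh h₁) m⁻¹ := by
      rw [map_inv, key4, inv_inv]
    set n := T.actL (T.dh h₁) m⁻¹ with hn'
    have hdl2 : T.actH (T.dh h₁) (T.dl m)⁻¹ = T.dl n := by
      rw [hn', T.equiv_dl, map_inv T.dl]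
    rw [hn, hdl2] at h4
    have triv : T.pf (T.dl n)⁻¹ (T.dl n) = 1 := by
      rw [← map_inv T.dl, ← T.ax2]; group
    rw [triv, mul_one, ← hn] at h4
    exact h4
  rw [key5, key4, key7]; group
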